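/- Let G = (V, E) be a finite simple graph, r a positive integer, and S an r-incident independent multiset of vertices. Then |G ⋆^r S⟩ = U |G⟩, where U is the local unitary that acts on the qubit of each vertex w ∈ V by the single-qubit gate X(S(w)·π/2^r) · Z(−(π/2^r) · Σ_{u ∈ N_G(w)} S(u)). -/

import Mathlib

open Classical Real Matrix

noncomputable section

variable {V : Type} [Fintype V] [DecidableEq V]

/-- The number of edges of `G` with both endpoints in `A`. -/
def edgeCount (G : SimpleGraph V) (A : Finset V) : ℕ :=
  (Finset.univ.filter (fun p : V × V => G.Adj p.1 p.2 ∧ p.1 ∈ A ∧ p.2 ∈ A)).card / 2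

/-- The graph state `|G⟩`, as a vector in `ℂ^(V → {0,1})`. -/
def graphState (G : SimpleGraph V) : (V → Bool) → ℂ :=
  fun x => (-1 : ℂ) ^ edgeCount G (Finset.univ.filter (fun v => x v = true)) /
    (Real.sqrt (2 ^ Fintype.card V) : ℂ)

/-- The odd neighbourhood `Odd_G(D)` of a set `D` of vertices. -/
def oddNbhd (G : SimpleGraph V) (D : Finset V) : Finset V :=
  Finset.univ.filter (fun v => Odd ((D.filter (fun u => G.Adj v u)).card))

/-- The operator `X_A` flipping the coordinates in `A`. -/
def Xop (A : Finset V) (ψ : (V → Bool) → ℂ) : (V → Bool) → ℂ :=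
  fun x => ψ (fun v => if v ∈ A then !(x v) else x v)

/-- The operator `Z_A`. -/
def Zop (A : Finset V) (ψ : (V → Bool) → ℂ) : (V → Bool) → ℂ :=
  fun x => (-1 : ℂ) ^ ((A.filter (fun v => x v = true)).card) * ψ x

/-- The Pauli operator `𝒫_D^G = (−1)^{|G[D]|} X_D Z_{Odd_G(D)}`. -/
def pauliP (G : SimpleGraph V) (D : Finset V) (ψ : (V → Bool) → ℂ) : (V → Bool) → ℂ :=
  fun x => (-1 : ℂ) ^ edgeCount G D * Xop D (Zop (oddNbhd G D) ψ) x

/-- Index of a Bool in `Fin 2`. -/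
def boolIdx (b : Bool) : Fin 2 := if b then 1 else 0

/-- Action of a local (tensor-product) operator `⊗_u U_u` on the state space. -/
def applyLocal (U : V → Matrix (Fin 2) (Fin 2) ℂ) (ψ : (V → Bool) → ℂ) : (V → Bool) → ℂ :=
  fun x => ∑ y : V → Bool, (∏ u, U u (boolIdx (x u)) (boolIdx (y u))) * ψ y

/-- A local unitary: each single-qubit factor is unitary. -/
def IsLocalUnitary (U : V → Matrix (Fin 2) (Fin 2) ℂ) : Prop :=
  ∀ u, U u ∈ Matrix.unitaryGroup (Fin 2) ℂ

def Xgate : Matrix (Fin 2) (Fin 2) ℂ := !![0, 1; 1, 0]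

def Zgate : Matrix (Fin 2) (Fin 2) ℂ := !![1, 0; 0, -1]

def Ygate : Matrix (Fin 2) (Fin 2) ℂ := Complex.I • (Xgate * Zgate)

def Hgate : Matrix (Fin 2) (Fin 2) ℂ := (1 / (Real.sqrt 2 : ℂ)) • !![1, 1; 1, -1]

/-- The rotation `Z(α) = diag(1, e^{iα})`. -/
def Zrot (α : ℝ) : Matrix (Fin 2) (Fin 2) ℂ := !![1, 0; 0, Complex.exp (Complex.I * (α : ℂ))]

/-- The rotation `X(α) = H Z(α) H`. -/
def Xrot (α : ℝ) : Matrix (Fin 2) (Fin 2) ℂ := Hgate * Zrot α * Hgate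

/-- A 2×2 matrix is in the Pauli group. -/
def IsPauliGate (M : Matrix (Fin 2) (Fin 2) ℂ) : Prop :=
  ∃ z ∈ ({1, -1, Complex.I, -Complex.I} : Set ℂ),
    ∃ P ∈ ({1, Xgate, Ygate, Zgate} : Set (Matrix (Fin 2) (Fin 2) ℂ)), M = z • P

/-- A 2×2 unitary is Clifford if it maps `X` and `Z` to the Pauli group under conjugation. -/
def IsCliffordGate (C : Matrix (Fin 2) (Fin 2) ℂ) : Prop :=
  C ∈ Matrix.unitaryGroup (Fin 2) ℂ ∧ IsPauliGate (C * Xgate * Cᴴ) ∧ IsPauliGate (C * Zgate * Cᴴ)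

/-- The subgroup `LC_r` of 2×2 unitaries generated by `H` and `Z(π/2^r)`. -/
inductive InLCr (r : ℕ) : Matrix (Fin 2) (Fin 2) ℂ → Prop
  | H : InLCr r Hgate
  | Z : InLCr r (Zrot (π / 2 ^ r))
  | one : InLCr r 1
  | mul {A B : Matrix (Fin 2) (Fin 2) ℂ} : InLCr r A → InLCr r B → InLCr r (A * B)
  | inv {A : Matrix (Fin 2) (Fin 2) ℂ} : InLCr r A → InLCr r A⁻¹

/-- Two states are LU-equivalent when some local unitary maps one to the other. -/
def LUequiv (ψ φ : (V → Bool) → ℂ) : Prop :=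
  ∃ U : V → Matrix (Fin 2) (Fin 2) ℂ, IsLocalUnitary U ∧ φ = applyLocal U ψ

/-- Two states are `LC_r`-equivalent when some local unitary with all factors in `LC_r`
maps one to the other. -/
def LCrEquiv (r : ℕ) (ψ φ : (V → Bool) → ℂ) : Prop :=
  ∃ U : V → Matrix (Fin 2) (Fin 2) ℂ, (∀ u, InLCr r (U u)) ∧ φ = applyLocal U ψ

/-- Local complementation of `G` at a vertex `u`: `v ∼ w` iff `(v ∼_G w) XOR (v, w ∈ N_G(u))`. -/
def localComp (G : SimpleGraph V) (u : V) : SimpleGraph V where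
  Adj v w := v ≠ w ∧ ¬ (G.Adj v w ↔ G.Adj u v ∧ G.Adj u w)
  symm := ⟨by
    intro v w h
    obtain ⟨h1, h2⟩ := h
    refine ⟨h1.symm, fun h => h2 ?_⟩
    rw [G.adj_comm w v] at h
    tauto⟩
  loopless := ⟨fun v h => h.1 rfl⟩

/-- Local equivalence: related by a sequence of local complementations. -/
def LocalEquiv : SimpleGraph V → SimpleGraph V → Prop :=
  Relation.ReflTransGen (fun G G' => ∃ u, G' = localComp G u)

/-- The local Clifford operator `L_u^G = X_u(π/2) ⊗_{v ∈ N_G(u)} Z_v(−π/2)`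
implementing the local complementation at `u`. -/
def Lmat (G : SimpleGraph V) (u : V) : V → Matrix (Fin 2) (Fin 2) ℂ :=
  fun v => if v = u then Xrot (π / 2) else if G.Adj u v then Zrot (-(π / 2)) else 1

/-- The local Clifford operator implementing a sequence of local complementations:
`lcSeqOp G [a₁, …, a_m] = L_{a_m}^{G^{(m−1)}} ⋯ L_{a_1}^{G^{(0)}}` (pointwise products). -/
def lcSeqOp : SimpleGraph V → List V → V → Matrix (Fin 2) (Fin 2) ℂ
  | _, [] => fun _ => 1
  | G, a :: l => fun v => lcSeqOp (localComp G a) l v * Lmat G a v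

/-- The support of a multiset of vertices. -/
def msSupp (S : V → ℕ) : Finset V := Finset.univ.filter (fun u => 0 < S u)

/-- A multiset of vertices is independent in `G` when its support is an independent set. -/
def MsIndep (G : SimpleGraph V) (S : V → ℕ) : Prop :=
  ∀ u v, 0 < S u → 0 < S v → ¬ G.Adj u v

/-- `S • A = Σ_{u ∈ A} S(u)`. -/
def msDot (S : V → ℕ) (A : Finset V) : ℕ := ∑ u ∈ A, S u

/-- The common neighbourhood `Λ_G^K = ⋂_{u ∈ K} N_G(u)`. -/
def commonNbhd (G : SimpleGraph V) (K : Finset V) : Finset V :=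
  Finset.univ.filter (fun v => ∀ u ∈ K, G.Adj u v)

/-- The Kronecker delta `δ(0) = 1`, `δ(k) = 0` for `k > 0`. -/
def kdelta (k : ℕ) : ℕ := if k = 0 then 1 else 0

/-- `S` is `r`-incident in `G`. -/
def RIncident (G : SimpleGraph V) (r : ℕ) (S : V → ℕ) : Prop :=
  ∀ k < r, ∀ K : Finset V, (∀ u ∈ K, u ∉ msSupp S) → K.card = k + 2 →
    2 ^ (r - k - kdelta k) ∣ msDot S (commonNbhd G K)

/-- The `r`-local complementation `G ⋆^r S`. -/
def rLocalComp (G : SimpleGraph V) (r : ℕ) (S : V → ℕ) : SimpleGraph V where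
  Adj u v := u ≠ v ∧
    ¬ (G.Adj u v ↔ msDot S (commonNbhd G {u, v}) ≡ 2 ^ (r - 1) [MOD 2 ^ r])
  symm := ⟨by
    intro u v h
    obtain ⟨h1, h2⟩ := h
    refine ⟨h1.symm, fun h => h2 ?_⟩
    rw [G.adj_comm v u, Finset.pair_comm v u] at h
    exact h⟩
  loopless := ⟨fun u h => h.1 rfl⟩

/-- `G ⋆^r S` is valid when `S` is independent and `r`-incident. -/
def ValidRLC (G : SimpleGraph V) (r : ℕ) (S : V → ℕ) : Prop :=
  MsIndep G S ∧ RIncident G r S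

/-- `r`-local equivalence: related by a sequence of valid `r`-local complementations. -/
def RLocalEquiv (r : ℕ) : SimpleGraph V → SimpleGraph V → Prop :=
  Relation.ReflTransGen (fun G G' => ∃ S : V → ℕ, ValidRLC G r S ∧ G' = rLocalComp G r S)

/-- A local set of `G`: a nonempty set of the form `D ∪ Odd_G(D)`. -/
def IsLocalSet (G : SimpleGraph V) (L : Finset V) : Prop :=
  L.Nonempty ∧ ∃ D : Finset V, L = D ∪ oddNbhd G D

/-- A minimal local set of `G`. -/
def IsMLS (G : SimpleGraph V) (L : Finset V) : Prop :=
  IsLocalSet G L ∧ ∀ L' : Finset V, IsLocalSet G L' → L' ⊆ L → L' = L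

/-- A vertex has type X in `G`. -/
def HasTypeX (G : SimpleGraph V) (u : V) : Prop :=
  (∃ L, IsMLS G L ∧ u ∈ L) ∧
  ∀ L D : Finset V, IsMLS G L → u ∈ L → L = D ∪ oddNbhd G D → u ∈ D ∧ u ∉ oddNbhd G D

/-- A vertex has type Y in `G`. -/
def HasTypeY (G : SimpleGraph V) (u : V) : Prop :=
  (∃ L, IsMLS G L ∧ u ∈ L) ∧
  ∀ L D : Finset V, IsMLS G L → u ∈ L → L = D ∪ oddNbhd G D → u ∈ D ∧ u ∈ oddNbhd G D

/-- A vertex has type Z in `G`. -/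
def HasTypeZ (G : SimpleGraph V) (u : V) : Prop :=
  (∃ L, IsMLS G L ∧ u ∈ L) ∧
  ∀ L D : Finset V, IsMLS G L → u ∈ L → L = D ∪ oddNbhd G D → u ∉ D ∧ u ∈ oddNbhd G D

/-- A vertex has type ⊥ in `G`. -/
def HasTypeBot (G : SimpleGraph V) (u : V) : Prop :=
  ¬ HasTypeX G u ∧ ¬ HasTypeY G u ∧ ¬ HasTypeZ G u

/-- A graph on a linearly ordered vertex set is in standard form. -/
def StandardForm {W : Type} [Fintype W] [LinearOrder W] (G : SimpleGraph W) : Prop :=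
  (∀ u, ¬ HasTypeY G u) ∧
  ∀ u, HasTypeX G u → ∀ v, G.Adj u v → HasTypeZ G v ∧ u < v

/-- The `k`-subsets of `[1, t]`. -/
abbrev KSubsets (t k : ℕ) := {A : Finset (Fin t) // A.card = k}

/-- The vertex set of the graphs `C_{t,k}` and `C'_{t,k}`. -/
abbrev CtkVertex (t k : ℕ) := Fin t ⊕ KSubsets t k

/-- The bipartite graph `C_{t,k}`: `u ∈ [1,t]` is adjacent to a `k`-subset `A` iff `u ∈ A`. -/
def Ctk (t k : ℕ) : SimpleGraph (CtkVertex t k) :=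
  SimpleGraph.fromRel (fun x y =>
    ∃ (u : Fin t) (A : KSubsets t k), x = Sum.inl u ∧ y = Sum.inr A ∧ u ∈ A.1)

/-- The graph `C'_{t,k}`: `C_{t,k}` together with all edges between distinct elements of `[1,t]`. -/
def Ctk' (t k : ℕ) : SimpleGraph (CtkVertex t k) :=
  SimpleGraph.fromRel (fun x y =>
    (∃ (u : Fin t) (A : KSubsets t k), x = Sum.inl u ∧ y = Sum.inr A ∧ u ∈ A.1) ∨
    (∃ u v : Fin t, x = Sum.inl u ∧ y = Sum.inl v))

end

open Finset

/-!
Fix a basis vector `x`; let `P` be the support of `S` and `A` the set of vertices outside `P`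
on which `x` is `1`. Off `P` the gates are diagonal phases, so only the basis vectors `y` that
agree with `x` off `P` contribute. As `P` is independent, for those `y` the amplitude `|G⟩(y)` is
`(-1)^{|G[A]|}` times a product over `w ∈ P` of `(-1)^{y(w) |N(w) ∩ A|}`, on which the gates on
`P` act qubit by qubit. The outcome agrees with `|G ⋆^r S⟩(x)` except that the phase
`exp(-2πi M / 2^r)`, with `M = Σ_w S(w) ⌊|N(w) ∩ A| / 2⌋`, stands in place of the sign `(-1)^T`,
where `T` counts the pairs in `A` toggled by the `r`-local complementation. Expanding
`⌊n/2⌋ = Σ_k (-2)^k C(n, k+2)` gives `M = Σ_k (-2)^k Σ_{K ⊆ A, |K| = k+2} S • Λ^K`; by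
`r`-incidence the terms with `k ≥ 1` vanish modulo `2^r` and the term with `k = 0` is
`2^{r-1} T` modulo `2^r`, so the phase is exactly `(-1)^T`.
-/

lemma div_two_eq_sum_choose {n N : ℕ} (hn : n ≤ N + 2) :
    ((n / 2 : ℕ) : ℤ) = ∑ k ∈ range (N + 1), (-2) ^ k * (n.choose (k + 2) : ℤ) := by
  have hbinom : ((-2 : ℤ) + 1) ^ n
      = 1 - 2 * n + 4 * ∑ k ∈ range (N + 1), (-2) ^ k * (n.choose (k + 2) : ℤ) := by
    rw [add_pow, sum_subset (range_subset_range.2 (show n + 1 ≤ N + 3 by omega))]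
    · rw [sum_range_succ', sum_range_succ', mul_sum]
      have hshift : ∀ k, (-2 : ℤ) ^ (k + 1 + 1) * n.choose (k + 1 + 1)
          = 4 * ((-2) ^ k * n.choose (k + 2)) := fun k => by ring
      simp only [one_pow, mul_one, hshift, zero_add, Nat.choose_zero_right,
        Nat.choose_one_right, Nat.cast_one]
      ring
    · intro j _ hj
      rw [Nat.choose_eq_zero_of_lt (by simpa using hj), Nat.cast_zero, mul_zero]
  rw [show (-2 : ℤ) + 1 = -1 by norm_num] at hbinom
  obtain ⟨m, rfl | rfl⟩ := Nat.even_or_odd' n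
  · rw [pow_mul] at hbinom
    norm_num at hbinom
    omega
  · rw [pow_succ, pow_mul] at hbinom
    norm_num at hbinom
    omega

lemma modEq_ite_of_two_pow_pred_dvd {m r : ℕ} (hr : 0 < r) (hm : 2 ^ (r - 1) ∣ m) :
    (m : ℤ) ≡ 2 ^ (r - 1) * if m ≡ 2 ^ (r - 1) [MOD 2 ^ r] then 1 else 0 [ZMOD 2 ^ r] := by
  obtain ⟨j, rfl⟩ := hm
  have h2r : (2 : ℕ) ^ r = 2 ^ (r - 1) * 2 := by rw [← pow_succ, Nat.sub_add_cancel hr]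
  have hiff : 2 ^ (r - 1) * j ≡ 2 ^ (r - 1) [MOD 2 ^ r] ↔ j % 2 = 1 := by
    have hpos : 0 < 2 ^ (r - 1) := by positivity
    rw [Nat.ModEq, h2r, Nat.mul_mod_mul_left, Nat.mod_eq_of_lt (a := 2 ^ (r - 1)) (by omega),
      Nat.mul_eq_left hpos.ne']
  rw [Int.modEq_iff_dvd, show (2 : ℤ) ^ r = 2 ^ (r - 1) * 2 by exact_mod_cast h2r]
  obtain ⟨i, rfl | rfl⟩ := Nat.even_or_odd' j
  · rw [if_neg (by rw [hiff]; omega)]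
    exact ⟨-i, by push_cast; ring⟩
  · rw [if_pos (by rw [hiff]; omega)]
    exact ⟨-i, by push_cast; ring⟩

lemma cexp_pi_div_two_pow_mul_neg_two {r : ℕ} (hr : 0 < r) {M : ℤ} {T : ℕ}
    (h : M ≡ 2 ^ (r - 1) * T [ZMOD 2 ^ r]) :
    Complex.exp (Complex.I * (π / 2 ^ r * (-2 * M))) = (-1) ^ T := by
  obtain ⟨q, hq⟩ := h.symm.dvd
  have hM : (M : ℂ) = 2 ^ (r - 1) * T + 2 ^ r * q := by
    rw [← sub_eq_iff_eq_add']
    exact_mod_cast hq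
  have h2r : (2 : ℂ) ^ r = 2 ^ (r - 1) * 2 := by rw [← pow_succ, Nat.sub_add_cancel hr]
  have harg : Complex.I * (π / 2 ^ r * (-2 * M))
      = T * (π * Complex.I) + ((-(T + q) : ℤ) : ℂ) * (2 * π * Complex.I) := by
    rw [hM, h2r]
    push_cast
    field_simp
    ring
  rw [harg, Complex.exp_add, Complex.exp_nat_mul, Complex.exp_pi_mul_I,
    Complex.exp_int_mul_two_pi_mul_I, mul_one]

lemma neg_one_pow_card_filter_not_iff {ι R : Type*} [CommRing R] (s : Finset ι)
    (p q : ι → Prop) [DecidablePred p] [DecidablePred q] :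
    (-1 : R) ^ #{x ∈ s | ¬ (p x ↔ q x)} = (-1) ^ #{x ∈ s | p x} * (-1) ^ #{x ∈ s | q x} := by
  simp only [← prod_const, prod_filter, ← prod_mul_distrib]
  refine prod_congr rfl fun x _ => ?_
  by_cases hp : p x <;> by_cases hq : q x <;> simp [hp, hq]

lemma ofReal_sqrt_two_sq : ((√2 : ℝ) : ℂ) ^ 2 = 2 := by
  rw [← Complex.ofReal_pow, Real.sq_sqrt zero_le_two]
  norm_num

lemma Hgate_mul_Hgate : Hgate * Hgate = 1 := by
  ext i j
  fin_cases i <;> fin_cases j <;> simp [Hgate, Matrix.mul_apply, Fin.sum_univ_two] <;>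
    field_simp <;> rw [ofReal_sqrt_two_sq] <;> norm_num

lemma Zrot_zero : Zrot 0 = 1 := by
  ext i j
  fin_cases i <;> fin_cases j <;> simp [Zrot]

lemma Xrot_zero : Xrot 0 = 1 := by
  rw [Xrot, Zrot_zero, mul_one, Hgate_mul_Hgate]

lemma Zrot_boolIdx (φ : ℝ) (a b : Bool) :
    Zrot φ (boolIdx a) (boolIdx b) =
      if a = b then (if a then Complex.exp (Complex.I * φ) else 1) else 0 := by
  cases a <;> cases b <;> simp [Zrot, boolIdx]

lemma Xrot_boolIdx (θ : ℝ) (a b : Bool) :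
    Xrot θ (boolIdx a) (boolIdx b) =
      if a = b then (1 + Complex.exp (Complex.I * θ)) / 2
      else (1 - Complex.exp (Complex.I * θ)) / 2 := by
  cases a <;> cases b <;>
    simp [Xrot, Hgate, Zrot, boolIdx, Matrix.mul_apply, Fin.sum_univ_two] <;> field_simp <;>
    rw [ofReal_sqrt_two_sq] <;> ring

lemma sum_Xrot_boolIdx_mul (θ : ℝ) (n : ℕ) (a : Bool) :
    ∑ b, Xrot θ (boolIdx a) (boolIdx b) * (if b then (-1) ^ n else 1)
      = (if a then (-1) ^ n else 1) * Complex.exp (Complex.I * (θ * (n % 2 : ℕ))) := by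
  rcases Nat.even_or_odd n with h | h
  · rw [h.neg_one_pow, Nat.even_iff.1 h]
    cases a <;> simp [Xrot_boolIdx] <;> ring
  · rw [h.neg_one_pow, Nat.odd_iff.1 h]
    cases a <;> simp [Xrot_boolIdx] <;> ring

section

variable {V : Type} [Fintype V] [DecidableEq V]

def trueSet (x : V → Bool) : Finset V := {v | x v = true}

lemma graphState_apply (G : SimpleGraph V) (x : V → Bool) :
    graphState G x = (-1) ^ edgeCount G (trueSet x) / (√(2 ^ Fintype.card V) : ℂ) :=
  rfl

lemma edgeCount_eq_card_interedges (G : SimpleGraph V) (A : Finset V) :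
    edgeCount G A = #(G.interedges A A) / 2 := by
  rw [edgeCount]
  congr 2
  ext ⟨u, v⟩
  simp [SimpleGraph.mem_interedges_iff]
  tauto

omit [Fintype V] in
lemma card_interedges_eq_sum (G : SimpleGraph V) (A B : Finset V) :
    #(G.interedges A B) = ∑ u ∈ A, #{v ∈ B | G.Adj u v} := by
  rw [SimpleGraph.interedges, Rel.interedges_eq_biUnion, card_biUnion]
  · simp
  · intro a _ b _ hab
    simp only [Function.onFun, disjoint_left, mem_map]
    rintro _ ⟨_, _, rfl⟩ ⟨_, _, h⟩
    exact hab (Prod.ext_iff.1 h).1.symm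

lemma edgeCount_union {G : SimpleGraph V} {A B : Finset V} (hAB : Disjoint A B)
    (hB : G.IsIndepSet (B : Set V)) :
    edgeCount G (A ∪ B) = edgeCount G A + ∑ w ∈ B, #{v ∈ A | G.Adj w v} := by
  have hcross : #(G.interedges A B) = #(G.interedges B A) :=
    haveI := G.symm; Rel.card_interedges_comm _ _
  have hBB : ∑ u ∈ B, #{v ∈ B | G.Adj u v} = 0 :=
    sum_eq_zero fun u hu => card_eq_zero.2 <|
      filter_eq_empty_iff.2 fun v hv hadj => hB hu hv hadj.ne hadj
  rw [card_interedges_eq_sum] at hcross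
  rw [edgeCount_eq_card_interedges, edgeCount_eq_card_interedges, card_interedges_eq_sum,
    card_interedges_eq_sum, sum_union hAB]
  simp only [filter_union, card_union_of_disjoint (disjoint_filter_filter hAB), sum_add_distrib,
    hBB, hcross, ← card_interedges_eq_sum]
  omega

omit [Fintype V] in
lemma card_interedges_self_eq_two_mul (G : SimpleGraph V) (A : Finset V) :
    #(G.interedges A A) =
      2 * #((powersetCard 2 A).filter fun K : Finset V => G.IsClique (K : Set V)) := by
  have himage : (G.interedges A A).image (fun p => ({p.1, p.2} : Finset V))
      = (powersetCard 2 A).filter fun K : Finset V => G.IsClique (K : Set V) := by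
    ext K
    simp only [mem_image, mem_filter, mem_powersetCard, SimpleGraph.mem_interedges_iff,
      card_eq_two]
    constructor
    · rintro ⟨⟨u, v⟩, ⟨hu, hv, huv⟩, rfl⟩
      refine ⟨⟨by simp [insert_subset_iff, hu, hv], u, v, huv.ne, rfl⟩, ?_⟩
      rw [coe_pair, SimpleGraph.isClique_pair]
      exact fun _ => huv
    · rintro ⟨⟨hK, u, v, huv, rfl⟩, hcl⟩
      rw [coe_pair, SimpleGraph.isClique_pair] at hcl
      exact ⟨(u, v), ⟨hK (by simp), hK (by simp), hcl huv⟩, rfl⟩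
  rw [card_eq_sum_card_image (fun p => ({p.1, p.2} : Finset V)), himage, mul_comm,
    ← smul_eq_mul, ← sum_const]
  refine sum_congr rfl fun K hK => ?_
  obtain ⟨⟨hK, hcard⟩, hcl⟩ := mem_filter.1 hK |>.imp_left mem_powersetCard.1
  obtain ⟨u, v, huv, rfl⟩ := card_eq_two.1 hcard
  rw [coe_pair, SimpleGraph.isClique_pair] at hcl
  have hfiber : {p ∈ G.interedges A A | ({p.1, p.2} : Finset V) = {u, v}} = {(u, v), (v, u)} := by
    ext ⟨a, b⟩
    simp only [mem_filter, SimpleGraph.mem_interedges_iff, mem_insert, mem_singleton,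
      Prod.mk.injEq]
    constructor
    · rintro ⟨-, h⟩
      have h' := congrArg (fun s : Finset V => (s : Set V)) h
      simp only [coe_pair] at h'
      exact Set.pair_eq_pair_iff.1 h'
    · rintro (⟨rfl, rfl⟩ | ⟨rfl, rfl⟩)
      · exact ⟨⟨hK (by simp), hK (by simp), hcl huv⟩, rfl⟩
      · exact ⟨⟨hK (by simp), hK (by simp), (hcl huv).symm⟩, pair_comm _ _⟩
  rw [hfiber, card_pair (by simp [huv])]

lemma edgeCount_eq_card_isClique (G : SimpleGraph V) (A : Finset V) :
    edgeCount G A = #((powersetCard 2 A).filter fun K : Finset V => G.IsClique (K : Set V)) := by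
  rw [edgeCount_eq_card_interedges, card_interedges_self_eq_two_mul,
    Nat.mul_div_cancel_left _ two_pos]

lemma edgeCount_eq_add_sum_of_isIndepSet {G : SimpleGraph V} {P : Finset V}
    (hP : G.IsIndepSet (P : Set V)) (X : Finset V) :
    edgeCount G X = edgeCount G (X \ P) + ∑ w ∈ X ∩ P, #{v ∈ X \ P | G.Adj w v} := by
  conv_lhs => rw [← sdiff_union_inter X P]
  exact edgeCount_union (disjoint_sdiff_inter X P) (hP.mono (by simp))

lemma neg_one_pow_edgeCount_rLocalComp {R : Type*} [CommRing R] (G : SimpleGraph V) (r : ℕ)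
    (S : V → ℕ) (A : Finset V) :
    (-1 : R) ^ edgeCount (rLocalComp G r S) A = (-1) ^ edgeCount G A *
      (-1) ^ #{K ∈ powersetCard 2 A | msDot S (commonNbhd G K) ≡ 2 ^ (r - 1) [MOD 2 ^ r]} := by
  rw [edgeCount_eq_card_isClique, edgeCount_eq_card_isClique, ← neg_one_pow_card_filter_not_iff]
  congr 2
  refine filter_congr fun K hK => ?_
  obtain ⟨u, v, huv, rfl⟩ := card_eq_two.1 (mem_powersetCard.1 hK).2
  simp [huv, rLocalComp]

lemma applyLocal_apply_eq_of_offDiag_eq_zero {U : V → Matrix (Fin 2) (Fin 2) ℂ} {P : Finset V}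
    (hU : ∀ u ∉ P, ∀ a b : Bool, a ≠ b → U u (boolIdx a) (boolIdx b) = 0)
    {ψ φ : (V → Bool) → ℂ} {x : V → Bool} (h : ∀ y, (∀ u ∉ P, y u = x u) → ψ y = φ y) :
    applyLocal U ψ x = applyLocal U φ x := by
  refine sum_congr rfl fun y _ => ?_
  by_cases hy : ∀ u ∉ P, y u = x u
  · rw [h y hy]
  · obtain ⟨u, hu, hne⟩ := not_forall₂.1 hy
    rw [prod_eq_zero (mem_univ u) (hU u hu _ _ (Ne.symm hne)), zero_mul, zero_mul]

lemma applyLocal_const_mul_prod (U : V → Matrix (Fin 2) (Fin 2) ℂ) (c : ℂ) (f : V → Bool → ℂ)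
    (x : V → Bool) :
    applyLocal U (fun y => c * ∏ u, f u (y u)) x
      = c * ∏ u, ∑ b, U u (boolIdx (x u)) (boolIdx b) * f u b := by
  rw [Fintype.prod_sum, mul_sum, applyLocal]
  exact sum_congr rfl fun y _ => by rw [prod_mul_distrib]; ring

lemma applyLocal_graphState_apply {G : SimpleGraph V} {P : Finset V}
    (hP : G.IsIndepSet (P : Set V)) {U : V → Matrix (Fin 2) (Fin 2) ℂ}
    (hU : ∀ u ∉ P, ∀ a b : Bool, a ≠ b → U u (boolIdx a) (boolIdx b) = 0) (x : V → Bool) :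
    applyLocal U (graphState G) x =
      (-1) ^ edgeCount G (trueSet x \ P) / (√(2 ^ Fintype.card V) : ℂ) *
        ∏ u, ∑ b, U u (boolIdx (x u)) (boolIdx b) *
          if b = true ∧ u ∈ P then (-1) ^ #{v ∈ trueSet x \ P | G.Adj u v} else 1 := by
  rw [← applyLocal_const_mul_prod]
  refine applyLocal_apply_eq_of_offDiag_eq_zero hU fun y hy => ?_
  have hA : trueSet y \ P = trueSet x \ P := by
    ext v
    by_cases hv : v ∈ P <;> simp [trueSet, hv, hy v]
  have hB : trueSet y ∩ P = ({u | y u = true ∧ u ∈ P} : Finset V) := by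
    ext
    simp [trueSet]
  rw [graphState_apply, edgeCount_eq_add_sum_of_isIndepSet hP, hA, hB, pow_add,
    ← prod_pow_eq_pow_sum, prod_filter]
  ring

lemma sum_msDot_powersetCard (G : SimpleGraph V) (S : V → ℕ) (A : Finset V) (k : ℕ) :
    ∑ K ∈ powersetCard k A, msDot S (commonNbhd G K)
      = ∑ w, S w * (#{v ∈ A | G.Adj w v}).choose k := by
  simp only [msDot, commonNbhd, sum_filter]
  rw [sum_comm]
  refine sum_congr rfl fun w _ => ?_
  have hsub : {K ∈ powersetCard k A | ∀ u ∈ K, G.Adj u w}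
      = powersetCard k {v ∈ A | G.Adj w v} := by
    ext K
    simp only [mem_filter, mem_powersetCard, subset_iff, G.adj_comm w]
    aesop
  rw [← sum_filter, hsub, sum_const, card_powersetCard, smul_eq_mul, mul_comm]

omit [DecidableEq V] in
lemma sum_sum_adj_eq (G : SimpleGraph V) (S : V → ℕ) (X : Finset V) :
    ∑ w ∈ X, ∑ u ∈ univ.filter (fun u => G.Adj w u), S u
      = ∑ u, S u * #{v ∈ X | G.Adj u v} := by
  simp only [sum_filter]
  rw [sum_comm]
  refine sum_congr rfl fun u _ => ?_
  rw [← sum_filter, sum_const, smul_eq_mul, mul_comm]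
  simp only [G.adj_comm]

noncomputable def rlcGate (G : SimpleGraph V) (r : ℕ) (S : V → ℕ) (w : V) :
    Matrix (Fin 2) (Fin 2) ℂ :=
  Xrot ((S w : ℝ) * (π / 2 ^ r)) *
    Zrot (-(π / 2 ^ r) * ∑ u ∈ Finset.univ.filter (fun u => G.Adj w u), (S u : ℝ))

variable {G : SimpleGraph V} {r : ℕ} {S : V → ℕ} {A : Finset V}

omit [DecidableEq V] in
lemma mem_msSupp {u : V} : u ∈ msSupp S ↔ 0 < S u := by
  simp [msSupp]

omit [Fintype V] [DecidableEq V] in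
lemma MsIndep.eq_zero_of_adj (hInd : MsIndep G S) {w u : V} (hw : 0 < S w) (hadj : G.Adj w u) :
    S u = 0 := by
  by_contra h
  exact hInd w u hw (Nat.pos_of_ne_zero h) hadj

omit [DecidableEq V] in
lemma MsIndep.isIndepSet_msSupp (hInd : MsIndep G S) : G.IsIndepSet (msSupp S : Set V) :=
  fun u hu v hv _ => hInd u v (mem_msSupp.1 hu) (mem_msSupp.1 hv)

lemma rLocalComp_adj_of_pos (hr : 0 < r) (hInd : MsIndep G S) {w : V} (hw : 0 < S w) (v : V) :
    (rLocalComp G r S).Adj w v ↔ G.Adj w v := by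
  have hzero : msDot S (commonNbhd G {w, v}) = 0 :=
    sum_eq_zero fun u hu => hInd.eq_zero_of_adj hw ((mem_filter.1 hu).2 w (mem_insert_self w _))
  have hnot : ¬ 0 ≡ 2 ^ (r - 1) [MOD 2 ^ r] := by
    rw [Nat.ModEq, Nat.zero_mod, Nat.mod_eq_of_lt (Nat.pow_lt_pow_right one_lt_two (by omega))]
    positivity
  simp only [rLocalComp, hzero, iff_false_intro hnot]
  exact ⟨fun h => by tauto, fun h => ⟨h.ne, by tauto⟩⟩

lemma graphState_rLocalComp_apply (hr : 0 < r) (hInd : MsIndep G S) (x : V → Bool) :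
    graphState (rLocalComp G r S) x =
      (-1) ^ edgeCount G (trueSet x \ msSupp S) / (√(2 ^ Fintype.card V) : ℂ) *
        ((∏ w ∈ trueSet x ∩ msSupp S, (-1) ^ #{v ∈ trueSet x \ msSupp S | G.Adj w v}) *
          (-1) ^ #{K ∈ powersetCard 2 (trueSet x \ msSupp S) |
            msDot S (commonNbhd G K) ≡ 2 ^ (r - 1) [MOD 2 ^ r]}) := by
  have hadj : ∀ w ∈ msSupp S, ∀ v, (rLocalComp G r S).Adj w v ↔ G.Adj w v :=
    fun w hw => rLocalComp_adj_of_pos hr hInd (mem_msSupp.1 hw)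
  have hP : (rLocalComp G r S).IsIndepSet (msSupp S : Set V) := fun u hu v hv huv h =>
    hInd.isIndepSet_msSupp hu hv huv ((hadj u hu v).1 h)
  rw [graphState_apply, edgeCount_eq_add_sum_of_isIndepSet hP, pow_add,
    neg_one_pow_edgeCount_rLocalComp, ← prod_pow_eq_pow_sum]
  rw [prod_congr rfl fun w hw => by rw [filter_congr fun v _ => hadj w (mem_inter.1 hw).2 v]]
  ring

lemma sum_msDot_pairs_modEq (hr : 0 < r) (hInc : RIncident G r S)
    (hA : ∀ v ∈ A, v ∉ msSupp S) :
    ((∑ K ∈ powersetCard 2 A, msDot S (commonNbhd G K) : ℕ) : ℤ) ≡ 2 ^ (r - 1) *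
      #{K ∈ powersetCard 2 A | msDot S (commonNbhd G K) ≡ 2 ^ (r - 1) [MOD 2 ^ r]}
        [ZMOD 2 ^ r] := by
  rw [card_filter, Nat.cast_sum, Nat.cast_sum, mul_sum]
  refine Int.ModEq.sum fun K hK => ?_
  rw [mem_powersetCard] at hK
  have hdvd := hInc 0 hr K (fun u hu => hA u (hK.1 hu)) hK.2
  simpa using modEq_ite_of_two_pow_pred_dvd hr (by simpa [kdelta] using hdvd)

lemma two_pow_dvd_neg_two_pow_mul_sum_msDot (hInc : RIncident G r S)
    (hA : ∀ v ∈ A, v ∉ msSupp S) (k : ℕ) :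
    (2 : ℤ) ^ r ∣ (-2) ^ (k + 1) *
      ((∑ K ∈ powersetCard (k + 3) A, msDot S (commonNbhd G K) : ℕ) : ℤ) := by
  rw [neg_pow, mul_assoc]
  refine dvd_mul_of_dvd_right ?_ _
  rcases lt_or_ge (k + 1) r with hk | hk
  · rw [show (2 : ℤ) ^ r = 2 ^ (k + 1) * 2 ^ (r - (k + 1)) by rw [← pow_add]; congr 1; omega]
    refine mul_dvd_mul_left _ ?_
    rw [Nat.cast_sum]
    refine dvd_sum fun K hK => ?_
    rw [mem_powersetCard] at hK
    have hdvd := hInc (k + 1) hk K (fun u hu => hA u (hK.1 hu)) hK.2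
    exact_mod_cast (by simpa [kdelta] using hdvd)
  · exact dvd_mul_of_dvd_left (pow_dvd_pow 2 hk) _

lemma sum_mul_div_two_modEq (hr : 0 < r) (hInc : RIncident G r S)
    (hA : ∀ v ∈ A, v ∉ msSupp S) :
    ((∑ w, S w * (#{v ∈ A | G.Adj w v} / 2) : ℕ) : ℤ) ≡ 2 ^ (r - 1) *
      #{K ∈ powersetCard 2 A | msDot S (commonNbhd G K) ≡ 2 ^ (r - 1) [MOD 2 ^ r]}
        [ZMOD 2 ^ r] := by
  have hexpand : ((∑ w, S w * (#{v ∈ A | G.Adj w v} / 2) : ℕ) : ℤ)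
      = ∑ k ∈ range (Fintype.card V + 1),
          (-2) ^ k * ((∑ K ∈ powersetCard (k + 2) A, msDot S (commonNbhd G K) : ℕ) : ℤ) := by
    simp only [sum_msDot_powersetCard, Nat.cast_sum, Nat.cast_mul, mul_sum]
    rw [sum_comm]
    refine sum_congr rfl fun w _ => ?_
    have hle : #{v ∈ A | G.Adj w v} ≤ Fintype.card V + 2 := (card_le_univ _).trans (by omega)
    rw [div_two_eq_sum_choose hle, mul_sum]
    exact sum_congr rfl fun k _ => by ring
  rw [hexpand, sum_range_succ', ← zero_add (2 ^ (r - 1) * _)]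
  refine Int.ModEq.add (Int.modEq_zero_iff_dvd.2 (dvd_sum fun k _ => ?_)) ?_
  · exact two_pow_dvd_neg_two_pow_mul_sum_msDot hInc hA k
  · simpa using sum_msDot_pairs_modEq hr hInc hA

omit [DecidableEq V] in
lemma rlcGate_boolIdx_of_ne {u : V} (hu : u ∉ msSupp S) {a b : Bool} (hab : a ≠ b) :
    rlcGate G r S u (boolIdx a) (boolIdx b) = 0 := by
  have hS0 : S u = 0 := by simpa [mem_msSupp] using hu
  simp [rlcGate, hS0, Xrot_zero, Zrot_boolIdx, hab]

lemma sum_rlcGate_mul_eq (hInd : MsIndep G S) (w : V) (a : Bool) (n : ℕ) :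
    ∑ b, rlcGate G r S w (boolIdx a) (boolIdx b) *
        (if b = true ∧ w ∈ msSupp S then (-1) ^ n else 1)
      = (if a = true ∧ w ∈ msSupp S then (-1) ^ n else 1) *
        Complex.exp (Complex.I * (π / 2 ^ r * (S w * (n % 2 : ℕ) -
          if a = true then ∑ u ∈ univ.filter (fun u => G.Adj w u), (S u : ℂ) else 0))) := by
  by_cases hw : 0 < S w
  · have hsum : ∑ u ∈ univ.filter (fun u => G.Adj w u), S u = 0 :=
      sum_eq_zero fun u hu => hInd.eq_zero_of_adj hw (mem_filter.1 hu).2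
    have hsumC : ∑ u ∈ univ.filter (fun u => G.Adj w u), (S u : ℂ) = 0 := by exact_mod_cast hsum
    have hsumR : ∑ u ∈ univ.filter (fun u => G.Adj w u), (S u : ℝ) = 0 := by exact_mod_cast hsum
    simp only [rlcGate, hsumR, mul_zero, Zrot_zero, mul_one, hsumC, ite_self, sub_zero,
      mem_msSupp.2 hw, and_true]
    rw [sum_Xrot_boolIdx_mul]
    push_cast
    ring_nf
  · have hw' : w ∉ msSupp S := fun h => hw (mem_msSupp.1 h)
    have hS0 : S w = 0 := by omega
    simp only [rlcGate, hS0, Nat.cast_zero, zero_mul, Xrot_zero, one_mul, hw', and_false,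
      if_false, mul_one]
    cases a <;> simp [Zrot_boolIdx]

lemma sum_mod_two_sub_sum_adj (hInd : MsIndep G S) (X : Finset V) :
    ∑ w, ((S w * (#{v ∈ X \ msSupp S | G.Adj w v} % 2) : ℕ) : ℤ)
        - ∑ w ∈ X, ∑ u ∈ univ.filter (fun u => G.Adj w u), (S u : ℤ)
      = -2 * ((∑ w, S w * (#{v ∈ X \ msSupp S | G.Adj w v} / 2) : ℕ) : ℤ) := by
  have hcount : ∀ u, S u * #{v ∈ X | G.Adj u v} = S u * #{v ∈ X \ msSupp S | G.Adj u v} := by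
    intro u
    rcases Nat.eq_zero_or_pos (S u) with h | h
    · simp [h]
    · congr 2
      ext v
      simp only [mem_filter, mem_sdiff, mem_msSupp]
      exact ⟨fun ⟨hv, hadj⟩ => ⟨⟨hv, by simp [hInd.eq_zero_of_adj h hadj]⟩, hadj⟩,
        fun ⟨⟨hv, _⟩, hadj⟩ => ⟨hv, hadj⟩⟩
  have hX : ∑ w ∈ X, ∑ u ∈ univ.filter (fun u => G.Adj w u), (S u : ℤ)
      = ((∑ u, S u * #{v ∈ X \ msSupp S | G.Adj u v} : ℕ) : ℤ) := by
    rw [← sum_congr rfl fun u _ => hcount u, ← sum_sum_adj_eq]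
    push_cast
    rfl
  rw [hX]
  simp only [Nat.cast_sum, Nat.cast_mul, mul_sum, ← sum_sub_distrib]
  refine sum_congr rfl fun w _ => ?_
  set n := #{v ∈ X \ msSupp S | G.Adj w v}
  have h : ((n % 2 : ℕ) : ℤ) + 2 * ((n / 2 : ℕ) : ℤ) = n := by exact_mod_cast Nat.mod_add_div n 2
  linear_combination (S w : ℤ) * h

lemma prod_sum_rlcGate_mul_eq (hr : 0 < r) (hInd : MsIndep G S) (hInc : RIncident G r S)
    (x : V → Bool) :
    ∏ w, ∑ b, rlcGate G r S w (boolIdx (x w)) (boolIdx b) *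
        (if b = true ∧ w ∈ msSupp S then (-1) ^ #{v ∈ trueSet x \ msSupp S | G.Adj w v} else 1)
      = (∏ w ∈ trueSet x ∩ msSupp S, (-1) ^ #{v ∈ trueSet x \ msSupp S | G.Adj w v}) *
        (-1) ^ #{K ∈ powersetCard 2 (trueSet x \ msSupp S) |
          msDot S (commonNbhd G K) ≡ 2 ^ (r - 1) [MOD 2 ^ r]} := by
  simp only [sum_rlcGate_mul_eq hInd, prod_mul_distrib, ← Complex.exp_sum, ← mul_sum]
  congr 1
  · rw [← prod_filter]
    congr 1
    ext w
    simp [trueSet]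
  · have hA : ∀ v ∈ trueSet x \ msSupp S, v ∉ msSupp S := fun v hv => (mem_sdiff.1 hv).2
    rw [← cexp_pi_div_two_pow_mul_neg_two hr (sum_mul_div_two_modEq hr hInc hA), sum_sub_distrib,
      ← sum_filter]
    congr 3
    exact_mod_cast sum_mod_two_sub_sum_adj hInd (trueSet x)

end

theorem stmt_5 {V : Type} [Fintype V] [DecidableEq V] (G : SimpleGraph V) (r : ℕ) (hr : 0 < r)
    (S : V → ℕ) (hS : MsIndep G S ∧ RIncident G r S) :
    graphState (rLocalComp G r S) =
      applyLocal (fun w =>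
        Xrot ((S w : ℝ) * (π / 2 ^ r)) *
        Zrot (-(π / 2 ^ r) * ∑ u ∈ Finset.univ.filter (fun u => G.Adj w u), (S u : ℝ)))
        (graphState G) := by
  obtain ⟨hInd, hInc⟩ := hS
  funext x
  change _ = applyLocal (rlcGate G r S) (graphState G) x
  rw [graphState_rLocalComp_apply hr hInd, applyLocal_graphState_apply hInd.isIndepSet_msSupp
    (fun u hu _ _ => rlcGate_boolIdx_of_ne hu), prod_sum_rlcGate_mul_eq hr hInd hInc]
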